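/- (Monotonicity under max-update) Let T be the best possible operator and define the simplified update: at step k, choose arbitrarily for each (s,a₁) some a₂ᵏ(s,a₁) ∈ A₂, set Q₁ᵉ(s,a₁) = Σ_{s'} P(s'|s,a₁,a₂ᵏ(s,a₁))[R(s,s') + γ max_{a₁'} Q₁ᵏ⁻¹(s',a₁')] and Q₁ᵏ(s,a₁) = max(Q₁ᵏ⁻¹(s,a₁), Q₁ᵉ(s,a₁)). If Q₁⁰ ≤ V₁ pointwise, then the sequence Q₁ᵏ is pointwise nondecreasing in k and Q₁ᵏ ≤ V₁ for all k, hence Q₁ᵏ converges pointwise. -/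

import Mathlib

open Finset Filter Topology

noncomputable def fmax {α : Type*} [Fintype α] [Nonempty α] (f : α → ℝ) : ℝ :=
  Finset.univ.sup' Finset.univ_nonempty f

lemma le_fmax {α : Type*} [Fintype α] [Nonempty α] (f : α → ℝ) (a : α) :
    f a ≤ fmax f := Finset.le_sup' f (Finset.mem_univ a)

lemma fmax_le {α : Type*} [Fintype α] [Nonempty α] {f : α → ℝ} {c : ℝ}
    (h : ∀ a, f a ≤ c) : fmax f ≤ c :=
  Finset.sup'_le _ f fun a _ => h a

lemma fmax_mono {α : Type*} [Fintype α] [Nonempty α] {f g : α → ℝ}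
    (h : ∀ a, f a ≤ g a) : fmax f ≤ fmax g :=
  fmax_le fun a => (h a).trans (le_fmax g a)

theorem stmt5
    {S A1 A2 : Type*} [Fintype S] [Nonempty S] [Fintype A1] [Nonempty A1]
    [Fintype A2] [Nonempty A2]
    (P : S → A1 → A2 → S → ℝ) (R : S → S → ℝ) (γ : ℝ)
    (hγ0 : 0 ≤ γ) (hγ1 : γ < 1)
    (hPnn : ∀ s a1 a2 s', 0 ≤ P s a1 a2 s')
    (hPsum : ∀ s a1 a2, ∑ s', P s a1 a2 s' = 1)
    (Q : S → A1 → A2 → ℝ)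
    (hQ : ∀ s a1 a2, Q s a1 a2 =
      ∑ s', P s a1 a2 s' * (R s s' + γ * fmax (fun p : A1 × A2 => Q s' p.1 p.2)))
    (V1 : S → A1 → ℝ)
    (hV1 : ∀ s a1, V1 s a1 = fmax (fun a2 => Q s a1 a2))
    (a2sel : ℕ → S → A1 → A2)
    (Q1 : ℕ → S → A1 → ℝ)
    (hrec : ∀ k s a1, Q1 (k + 1) s a1 =
      max (Q1 k s a1)
        (∑ s', P s a1 (a2sel (k + 1) s a1) s' *
          (R s s' + γ * fmax (fun a1' => Q1 k s' a1'))))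
    (hinit : ∀ s a1, Q1 0 s a1 ≤ V1 s a1) :
    (∀ k s a1, Q1 k s a1 ≤ Q1 (k + 1) s a1) ∧
    (∀ k s a1, Q1 k s a1 ≤ V1 s a1) ∧
    (∃ L : S → A1 → ℝ, ∀ s a1,
      Tendsto (fun k => Q1 k s a1) atTop (nhds (L s a1))) := by
  have hmono : ∀ k s a1, Q1 k s a1 ≤ Q1 (k + 1) s a1 := by
    intro k s a1
    rw [hrec]
    exact le_max_left _ _
  have hbd : ∀ k s a1, Q1 k s a1 ≤ V1 s a1 := by
    intro k
    induction k with
    | zero => exact hinit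
    | succ k ih =>
      intro s a1
      rw [hrec]
      refine max_le (ih s a1) ?_
      set a2 := a2sel (k + 1) s a1
      have step : ∀ s', P s a1 a2 s' * (R s s' + γ * fmax (fun a1' => Q1 k s' a1')) ≤
          P s a1 a2 s' * (R s s' + γ * fmax (fun p : A1 × A2 => Q s' p.1 p.2)) := by
        intro s'
        refine mul_le_mul_of_nonneg_left ?_ (hPnn s a1 a2 s')
        refine add_le_add_right (mul_le_mul_of_nonneg_left ?_ hγ0) _
        refine fmax_le fun a1' => ?_
        refine (ih s' a1').trans ?_
        rw [hV1]
        refine fmax_le fun b => le_fmax (fun p : A1 × A2 => Q s' p.1 p.2) (a1', b)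
      calc ∑ s', P s a1 a2 s' * (R s s' + γ * fmax (fun a1' => Q1 k s' a1'))
          ≤ ∑ s', P s a1 a2 s' * (R s s' + γ * fmax (fun p : A1 × A2 => Q s' p.1 p.2)) :=
            Finset.sum_le_sum fun s' _ => step s'
        _ = Q s a1 a2 := (hQ s a1 a2).symm
        _ ≤ V1 s a1 := by rw [hV1]; exact le_fmax _ a2
  refine ⟨hmono, hbd, fun s a1 => ⨆ k, Q1 k s a1, fun s a1 => ?_⟩
  exact tendsto_atTop_ciSup (monotone_nat_of_le_succ fun k => hmono k s a1)
    ⟨V1 s a1, fun x ⟨k, hk⟩ => hk ▸ hbd k s a1⟩
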